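/- arXiv:1907.08487 — 3 statements merged into one kernel-verified Lean document; each statement's English description precedes it below -/
import Mathlib

section
/- Robustness of coordinatewise max-pooling: let h : X → ℝ^p and define u(S) ∈ ℝ^p by u(S)_j = max_{x ∈ S} h(x)_j for nonempty finite S ⊆ X. Then for every nonempty finite S there exists a subset C_S ⊆ S with |C_S| ≤ p such that for every finite T with C_S ⊆ T ⊆ S, u(T) = u(S). -/
/-- coordinatewise max-pooling over a nonempty finite set is determined by a
critical subset of at most p elements. -/
theorem maxpool_critical_set {X : Type*} [DecidableEq X] (p : ℕ) (hp : 0 < p)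
    (h : X → Fin p → ℝ) (S : Finset X) (hS : S.Nonempty) :
    ∃ C : Finset X, C ⊆ S ∧ C.card ≤ p ∧
      ∀ (T : Finset X) (hT : T.Nonempty), C ⊆ T → T ⊆ S →
        ∀ j : Fin p, T.sup' hT (fun x => h x j) = S.sup' hS (fun x => h x j) := by
  have hchoice : ∀ j : Fin p, ∃ x ∈ S, S.sup' hS (fun x => h x j) = h x j := fun j =>
    Finset.exists_mem_eq_sup' hS (fun x => h x j)
  choose f hfS hf using hchoice
  refine ⟨Finset.image f Finset.univ, ?_, ?_, ?_⟩
  · intro x hx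
    obtain ⟨j, _, rfl⟩ := Finset.mem_image.mp hx
    exact hfS j
  · exact (Finset.card_image_le).trans (by simp)
  · intro T hT hCT hTS j
    apply le_antisymm
    · exact Finset.sup'_le _ _ fun x hx => Finset.le_sup' (fun x => h x j) (hTS hx)
    · rw [hf j]
      exact Finset.le_sup' (fun x => h x j) (hCT (Finset.mem_image.mpr ⟨j, Finset.mem_univ j, rfl⟩))
end

section
/- Universal approximation of continuous symmetric functions on a simplex-ordered domain via sum-pooling (Deep Sets, scalar case): let f : [0,1]^n → ℝ be continuous and symmetric (invariant under coordinate permutations). Then for every ε > 0 there exist continuous functions h : [0,1] → ℝ^{n+1} and ζ : ℝ^{n+1} → ℝ such that |f(x) − ζ(Σᵢ h(xᵢ))| < ε for all x ∈ [0,1]^n. In fact one can take h(t) = (1, t, t², ..., tⁿ) and achieve exact equality, f(x) = ζ(Σᵢ h(xᵢ)). -/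
/-!
The power sums `p₀, …, pₙ` of `x ∈ ℝⁿ` determine the elementary symmetric polynomials of `x` by
Newton's identities, hence the polynomial `∏ (X - xᵢ)` and the multiset of coordinates of `x`.
So the power-sum map is injective on sorted tuples, and on the compact set of sorted tuples in
`[0,1]ⁿ` it is a homeomorphism onto its image. Transporting `f` along it and extending by Tietze
gives a continuous `ζ` with `ζ ∘ p = f` on sorted tuples, and symmetry of `f` together with
permutation invariance of the power sums extends the identity to the whole cube.
-/

open Finset Polynomial

theorem MvPolynomial.aeval_esymm_eq_of_aeval_psum_eq {ι K : Type*} [Fintype ι] [Field K]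
    [CharZero K] {x y : ι → K} {m : ℕ}
    (hp : ∀ k ≤ m, aeval x (psum ι K k) = aeval y (psum ι K k)) :
    ∀ k ≤ m, aeval x (esymm ι K k) = aeval y (esymm ι K k) := by
  intro k
  induction k using Nat.strong_induction_on with
  | _ k ih =>
    intro hkm
    rcases k.eq_zero_or_pos with rfl | hk
    · simp
    have newton (z : ι → K) := congrArg (aeval z) (mul_esymm_eq_sum ι K k)
    simp only [map_mul, map_natCast, map_pow, map_neg, map_one, map_sum] at newton
    refine mul_left_cancel₀ (Nat.cast_ne_zero.mpr hk.ne') ?_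
    rw [newton x, newton y]
    congr 1
    refine sum_congr rfl fun a ha => ?_
    have ⟨hsum, hlt⟩ : a.1 + a.2 = k ∧ a.1 < k := by simpa using ha
    rw [ih a.1 hlt (by omega), hp a.2 (by omega)]

theorem Multiset.eq_of_esymm_eq {R : Type*} [CommRing R] [IsDomain R] {s t : Multiset R}
    (hcard : card s = card t) (he : ∀ k ≤ card s, s.esymm k = t.esymm k) : s = t := by
  have hprod : (s.map fun a => X - C a).prod = (t.map fun a => X - C a).prod := by
    ext k
    rcases le_or_gt k (card s) with hk | hk
    · rw [prod_X_sub_C_coeff s hk, prod_X_sub_C_coeff t (hcard ▸ hk), hcard,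
        he _ (hcard ▸ Nat.sub_le _ _)]
    · rw [coeff_eq_zero_of_natDegree_lt, coeff_eq_zero_of_natDegree_lt] <;>
        rw [natDegree_multiset_prod_X_sub_C_eq_card] <;> omega
  simpa only [roots_multiset_prod_X_sub_C] using congrArg roots hprod

theorem map_univ_val_eq_of_sum_pow_eq {ι K : Type*} [Fintype ι] [Field K] [CharZero K]
    {x y : ι → K} (hp : ∀ k ≤ Fintype.card ι, ∑ i, x i ^ k = ∑ i, y i ^ k) :
    univ.val.map x = univ.val.map y := by
  have he := MvPolynomial.aeval_esymm_eq_of_aeval_psum_eq (x := x) (y := y) (m := Fintype.card ι)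
    (by simpa [MvPolynomial.psum] using hp)
  simp only [MvPolynomial.aeval_esymm_eq_multiset_esymm] at he
  exact Multiset.eq_of_esymm_eq (by simp) (by simpa using he)

theorem Monotone.eq_of_map_univ_val_eq {α : Type*} [LinearOrder α] {n : ℕ} {x y : Fin n → α}
    (hx : Monotone x) (hy : Monotone y) (h : univ.val.map x = univ.val.map y) : x = y := by
  have hofFn (z : Fin n → α) : univ.val.map z = (List.ofFn z : Multiset α) := by
    rw [List.ofFn_eq_map]; rfl
  rw [hofFn, hofFn, Multiset.coe_eq_coe] at h
  exact List.ofFn_injective (h.eq_of_sortedLE (List.sortedLE_ofFn_iff.2 hx)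
    (List.sortedLE_ofFn_iff.2 hy))

universe u v w

theorem exists_continuousMap_comp_eq_of_injOn {X : Type u} {Y : Type v} {Z : Type w}
    [TopologicalSpace X] [TopologicalSpace Y] [T2Space Y] [NormalSpace Y]
    [TopologicalSpace Z] [TietzeExtension.{v, w} Z]
    {s : Set X} (hs : IsCompact s) {Φ : X → Y} (hΦ : ContinuousOn Φ s) (hinj : Set.InjOn Φ s)
    {f : X → Z} (hf : ContinuousOn f s) : ∃ g : C(Y, Z), ∀ x ∈ s, g (Φ x) = f x := by
  have := isCompact_iff_compactSpace.mp hs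
  have hemb : Topology.IsClosedEmbedding (s.domRestrict Φ) :=
    hΦ.domRestrict.isClosedEmbedding (Set.injOn_iff_injective.mp hinj)
  obtain ⟨g, hg⟩ := ContinuousMap.exists_extension' hemb ⟨s.domRestrict f, hf.domRestrict⟩
  exact ⟨g, fun x hx => congrFun hg ⟨x, hx⟩⟩

section PowerSums

variable {ι K : Type*} [Fintype ι] [CommSemiring K]

/-- The sum of the feature vectors `(1, xᵢ, …, xᵢ^(m-1))`, i.e. literally a sum-pooling. -/
def powerSums (m : ℕ) (x : ι → K) : Fin m → K := ∑ i, fun k => x i ^ (k : ℕ)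

@[simp]
theorem powerSums_apply (m : ℕ) (x : ι → K) (k : Fin m) :
    powerSums m x k = ∑ i, x i ^ (k : ℕ) :=
  sum_apply k _ _

theorem powerSums_comp_equiv (m : ℕ) (x : ι → K) (σ : Equiv.Perm ι) :
    powerSums m (x ∘ σ) = powerSums m x :=
  Equiv.sum_comp σ fun i (k : Fin m) => x i ^ (k : ℕ)

theorem continuous_powerSums [TopologicalSpace K] [IsTopologicalSemiring K] (m : ℕ) :
    Continuous (powerSums m : (ι → K) → Fin m → K) := by
  unfold powerSums; fun_prop

end PowerSums

theorem powerSums_injOn_monotone {K : Type*} [Field K] [LinearOrder K] [CharZero K] (n : ℕ) :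
    Set.InjOn (powerSums (n + 1)) {x : Fin n → K | Monotone x} := fun x hx y hy hxy =>
  hx.eq_of_map_univ_val_eq hy <| map_univ_val_eq_of_sum_pow_eq fun k hk =>
    by simpa using congrFun hxy ⟨k, Nat.lt_succ_of_le (by simpa using hk)⟩

/-- universal approximation (in fact exact representation) of continuous symmetric
functions on [0,1]^n via sum-pooling with power-sum features. -/
theorem deep_sets_universal (n : ℕ) (f : (Fin n → ℝ) → ℝ)
    (hf : ContinuousOn f {x : Fin n → ℝ | ∀ i, x i ∈ Set.Icc (0:ℝ) 1})
    (hsym : ∀ (π : Equiv.Perm (Fin n)) (x : Fin n → ℝ), f (x ∘ π) = f x) :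
    (∀ ε > (0:ℝ), ∃ (h : ℝ → Fin (n+1) → ℝ) (ζ : (Fin (n+1) → ℝ) → ℝ),
      Continuous h ∧ Continuous ζ ∧
      ∀ x : Fin n → ℝ, (∀ i, x i ∈ Set.Icc (0:ℝ) 1) →
        |f x - ζ (∑ i, h (x i))| < ε) ∧
    (∃ ζ : (Fin (n+1) → ℝ) → ℝ, Continuous ζ ∧
      ∀ x : Fin n → ℝ, (∀ i, x i ∈ Set.Icc (0:ℝ) 1) →
        f x = ζ (∑ i, fun k : Fin (n+1) => x i ^ (k : ℕ))) := by
  set cube := {x : Fin n → ℝ | ∀ i, x i ∈ Set.Icc (0:ℝ) 1}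
  have hcube : IsCompact cube := by
    simpa only [Set.pi, Set.mem_univ, true_imp_iff] using
      isCompact_univ_pi fun _ : Fin n => isCompact_Icc (a := (0:ℝ)) (b := 1)
  obtain ⟨ζ, hζ⟩ := exists_continuousMap_comp_eq_of_injOn (hcube.inter_right isClosed_monotone)
    (continuous_powerSums _).continuousOn ((powerSums_injOn_monotone n).mono Set.inter_subset_right)
    (hf.mono Set.inter_subset_left)
  have hrep (x) (hx : x ∈ cube) : f x = ζ (powerSums (n + 1) x) := by
    have hsorted : x ∘ Tuple.sort x ∈ cube ∩ {x | Monotone x} :=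
      ⟨fun i => hx _, Tuple.monotone_sort x⟩
    rw [← powerSums_comp_equiv _ _ (Tuple.sort x), hζ _ hsorted, hsym]
  refine ⟨fun ε hε => ⟨fun t k => t ^ (k : ℕ), ζ, by fun_prop, ζ.continuous, fun x hx => ?_⟩,
    ζ, ζ.continuous, hrep⟩
  change |f x - ζ (powerSums (n + 1) x)| < ε
  rwa [← hrep x hx, sub_self, abs_zero]
end

section
/- For K = 2 and fixed p₂, the function p₁ ↦ log(1 + a p₁/(c)) + log(1 + b/(d + e p₁)) with a, b, c, d, e > 0 attains its maximum over [0, P_max] at p₁ = 0 or p₁ = P_max. -/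
/-- in the two-user case with fixed p₂, the sum rate as a function of p₁ is
maximized at an endpoint of [0, Pmax] (binary power control). -/
theorem binary_power_optimal (a b c d e Pmax : ℝ)
    (ha : 0 < a) (hb : 0 < b) (hc : 0 < c) (hd : 0 < d) (he : 0 < e) (hP : 0 < Pmax) :
    ∀ p₁ ∈ Set.Icc (0:ℝ) Pmax,
      Real.log (1 + a * p₁ / c) + Real.log (1 + b / (d + e * p₁))
        ≤ max (Real.log (1 + a * 0 / c) + Real.log (1 + b / (d + e * 0)))
              (Real.log (1 + a * Pmax / c) + Real.log (1 + b / (d + e * Pmax))) := by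
  -- rewrite the objective as log(G q) - log c where G q = (c+aq)(d+eq+b)/(d+eq)
  have key : ∀ q : ℝ, 0 ≤ q →
      Real.log (1 + a * q / c) + Real.log (1 + b / (d + e * q))
        = Real.log ((c + a * q) * ((d + e * q) + b) / (d + e * q)) - Real.log c := by
    intro q hq
    have ht : 0 < d + e * q := by nlinarith
    have h1 : 1 + a * q / c = (c + a * q) / c := by field_simp
    have h2 : 1 + b / (d + e * q) = ((d + e * q) + b) / (d + e * q) := by field_simp
    have hca : 0 < c + a * q := by nlinarith
    have htb : 0 < (d + e * q) + b := by nlinarith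
    rw [h1, h2, Real.log_div hca.ne' hc.ne', Real.log_div htb.ne' ht.ne',
      Real.log_div (mul_pos hca htb).ne' ht.ne', Real.log_mul hca.ne' htb.ne']
    ring
  intro p hp
  obtain ⟨hp0, hpP⟩ := hp
  have ht : 0 < d + e * p := by nlinarith
  have hT : 0 < d + e * Pmax := by nlinarith
  have hca : 0 < c + a * p := by nlinarith
  have hcaP : 0 < c + a * Pmax := by nlinarith
  have hdisj : (c + a * p) * ((d + e * p) + b) / (d + e * p) ≤ c * (d + b) / d ∨
      (c + a * p) * ((d + e * p) + b) / (d + e * p)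
        ≤ (c + a * Pmax) * ((d + e * Pmax) + b) / (d + e * Pmax) := by
    by_cases h : a * (d + e * p) * (d + e * Pmax) ≥ (c * e - a * d) * b
    · right
      rw [div_le_div_iff₀ ht hT]
      nlinarith [mul_nonneg (sub_nonneg.2 hpP) (sub_nonneg.2 h)]
    · left
      push_neg at h
      have h' : a * (d + e * p) * d ≤ (c * e - a * d) * b := by
        nlinarith [mul_le_mul_of_nonneg_left (show d ≤ d + e * Pmax by nlinarith)
          (mul_pos ha ht).le]
      rw [div_le_div_iff₀ ht hd]
      nlinarith [mul_nonneg hp0 (sub_nonneg.2 h')]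
  rw [key p hp0, key 0 le_rfl, key Pmax hP.le]
  have e0 : d + e * 0 = d := by ring
  have e1 : c + a * 0 = c := by ring
  rw [e0, e1]
  have hGp : 0 < (c + a * p) * ((d + e * p) + b) / (d + e * p) := by positivity
  rcases hdisj with h | h
  · refine le_max_of_le_left ?_
    exact sub_le_sub_right (Real.log_le_log hGp h) _
  · refine le_max_of_le_right ?_
    exact sub_le_sub_right (Real.log_le_log hGp h) _
end
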